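/- arXiv:2205.02176 — 2 statements merged into one kernel-verified Lean document; each statement's English description precedes it below -/
import Mathlib

section
/- Let α̂ ∈ (0, 1] and ρ ∈ R_c be given by ρ(v) = α̂ · v · (|log v| + 1) for v > 0 and ρ(0) = 0. Then Φ_ρ(0) = −∞ and Φ_ρ(∞) = ∞, so that D_ρ = [0, ∞)², and for all v > 0 and w ≥ 0: Ψ_ρ(v, w) = exp((1 + log v)·e^{α̂ w} − 1) if v ≥ 1; Ψ_ρ(v, w) = exp(e^{α̂ w}/(1 − log v) − 1) if exp(1 − e^{α̂ w}) ≤ v < 1; and Ψ_ρ(v, w) = exp(1 − (1 − log v)·e^{−α̂ w}) if v < exp(1 − e^{α̂ w}). -/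
open MeasureTheory Filter Set

/-- `Φ_ρ(w) = ∫_1^w 1/ρ(v) dv` for `ρ ∈ R_c`. -/
noncomputable def Phi (ρ : ℝ → ℝ) (w : ℝ) : ℝ := ∫ v in (1:ℝ)..w, 1 / ρ v

/-- `Φ_ρ(0) = lim_{v↓0} Φ_ρ(v) ∈ [-∞, ∞)`, realised as an infimum in `EReal`. -/
noncomputable def Phi0 (ρ : ℝ → ℝ) : EReal :=
  sInf ((fun u => ((Phi ρ u : ℝ) : EReal)) '' Set.Ioi (0:ℝ))

/-- `Φ_ρ(∞) = lim_{v↑∞} Φ_ρ(v) ∈ (-∞, ∞]`, realised as a supremum in `EReal`. -/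
noncomputable def PhiInfty (ρ : ℝ → ℝ) : EReal :=
  sSup ((fun u => ((Phi ρ u : ℝ) : EReal)) '' Set.Ioi (0:ℝ))

/-- The `EReal`-valued extension of `Φ_ρ` to `[0,∞)`. -/
noncomputable def PhiE (ρ : ℝ → ℝ) (v : ℝ) : EReal :=
  if v = 0 then Phi0 ρ else ((Phi ρ v : ℝ) : EReal)

/-- `D_ρ`, the set of all `(v,w) ∈ [0,∞)²` with `Φ_ρ(v) + w < Φ_ρ(∞)`. -/
def Drho (ρ : ℝ → ℝ) : Set (ℝ × ℝ) :=
  {q | 0 ≤ q.1 ∧ 0 ≤ q.2 ∧ PhiE ρ q.1 + (q.2 : EReal) < PhiInfty ρ}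

/-- `Ψ_ρ(v,w) = Φ_ρ⁻¹(Φ_ρ(v) + w)`, where `Φ_ρ⁻¹` is extended by one-sided limits,
realised as `sup {u > 0 | Φ_ρ(u) ≤ Φ_ρ(v) + w}` (with `sup ∅ = 0`). -/
noncomputable def Psi (ρ : ℝ → ℝ) (v w : ℝ) : ℝ :=
  sSup {u : ℝ | 0 < u ∧ ((Phi ρ u : ℝ) : EReal) ≤ PhiE ρ v + (w : EReal)}

/-! On each side of `1` the integrand `1/ρ` has an elementary primitive, `±α⁻¹ log (1 ± log u)`,
so `Φ_ρ` is a strictly increasing bijection of `(0, ∞)` onto `ℝ` with explicit inverse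
`y ↦ exp (e^{αy} - 1)` for `y ≥ 0` and `y ↦ exp (1 - e^{-αy})` for `y ≤ 0`. This gives
`Φ_ρ(0) = -∞` and `Φ_ρ(∞) = ∞`, and `Ψ_ρ(v, w)` is that inverse at `Φ_ρ(v) + w`; the three cases
of the formula are the signs of `log v` and of `Φ_ρ(v) + w`. -/

section General

variable {ρ : ℝ → ℝ}

lemma intervalIntegrable_one_div_of_pos (hcont : ContinuousOn ρ (Ioi 0))
    (hpos : ∀ v > 0, 0 < ρ v) {a b : ℝ} (ha : 0 < a) (hb : 0 < b) :
    IntervalIntegrable (fun v => 1 / ρ v) volume a b := by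
  refine (continuousOn_const.div hcont fun v hv => (hpos v hv).ne').mono ?_
    |>.intervalIntegrable
  intro x hx
  rcases mem_uIcc.mp hx with ⟨hax, -⟩ | ⟨hbx, -⟩
  exacts [ha.trans_le hax, hb.trans_le hbx]

lemma Phi_strictMonoOn (hcont : ContinuousOn ρ (Ioi 0)) (hpos : ∀ v > 0, 0 < ρ v) :
    StrictMonoOn (Phi ρ) (Ioi 0) := by
  intro a (ha : 0 < a) b (hb : 0 < b) hab
  have hint {c d : ℝ} (hc : 0 < c) (hd : 0 < d) :=
    intervalIntegrable_one_div_of_pos hcont hpos hc hd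
  have hsub : Phi ρ b - Phi ρ a = ∫ x in a..b, 1 / ρ x :=
    intervalIntegral.integral_interval_sub_left (hint one_pos hb) (hint one_pos ha)
  have hpos_int : 0 < ∫ x in a..b, 1 / ρ x :=
    intervalIntegral.intervalIntegral_pos_of_pos_on (hint ha hb)
      (fun x hx => one_div_pos.mpr (hpos x (ha.trans hx.1))) hab
  linarith

lemma Psi_eq_of_Phi_eq (hmono : StrictMonoOn (Phi ρ) (Ioi 0)) {v w t : ℝ} (hv : 0 < v)
    (ht : 0 < t) (hPhi : Phi ρ t = Phi ρ v + w) : Psi ρ v w = t := by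
  have hset : {u : ℝ | 0 < u ∧ ((Phi ρ u : ℝ) : EReal) ≤ PhiE ρ v + (w : EReal)} = Ioc 0 t := by
    ext u
    simp only [mem_ofPred_eq, mem_Ioc, PhiE, if_neg hv.ne', ← EReal.coe_add,
      EReal.coe_le_coe_iff, ← hPhi]
    exact and_congr_right fun hu => hmono.le_iff_le hu ht
  rw [Psi, hset, csSup_Ioc ht]

lemma Phi0_eq_bot_of_image_eq_univ (h : Phi ρ '' Ioi 0 = univ) : Phi0 ρ = ⊥ := by
  refine sInf_eq_bot.mpr fun b hb => ?_
  obtain ⟨x, -, hxb⟩ := EReal.lt_iff_exists_real_btwn.mp hb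
  obtain ⟨u, hu, rfl⟩ : x ∈ Phi ρ '' Ioi 0 := h ▸ mem_univ x
  exact ⟨_, mem_image_of_mem _ hu, hxb⟩

lemma PhiInfty_eq_top_of_image_eq_univ (h : Phi ρ '' Ioi 0 = univ) : PhiInfty ρ = ⊤ := by
  refine sSup_eq_top.mpr fun b hb => ?_
  obtain ⟨x, hbx, -⟩ := EReal.lt_iff_exists_real_btwn.mp hb
  obtain ⟨u, hu, rfl⟩ : x ∈ Phi ρ '' Ioi 0 := h ▸ mem_univ x
  exact ⟨_, mem_image_of_mem _ hu, hbx⟩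

lemma PhiE_ne_top (v : ℝ) : PhiE ρ v ≠ ⊤ := by
  unfold PhiE
  split_ifs
  · exact ne_top_of_le_ne_top (EReal.coe_ne_top (Phi ρ 1))
      (sInf_le (mem_image_of_mem _ (mem_Ioi.mpr one_pos)))
  · exact EReal.coe_ne_top _

lemma Drho_eq_of_PhiInfty_eq_top (h : PhiInfty ρ = ⊤) : Drho ρ = Ici 0 ×ˢ Ici 0 := by
  ext ⟨v, w⟩
  simp only [Drho, h, mem_ofPred_eq, mem_prod, mem_Ici,
    EReal.add_lt_top (PhiE_ne_top v) (EReal.coe_ne_top w), and_true]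

end General

namespace LogLinearRate

variable {α : ℝ} {ρ : ℝ → ℝ}

lemma continuousOn_rho (hρ : ∀ v > 0, ρ v = α * v * (|Real.log v| + 1)) :
    ContinuousOn ρ (Ioi 0) := by
  refine ContinuousOn.congr ?_ fun v hv => hρ v hv
  have hlog : ContinuousOn Real.log (Ioi 0) :=
    Real.continuousOn_log.mono fun v hv => ne_of_gt (mem_Ioi.mp hv)
  exact (continuousOn_const.mul continuousOn_id).mul (hlog.abs.add continuousOn_const)

lemma rho_pos (hα : 0 < α) (hρ : ∀ v > 0, ρ v = α * v * (|Real.log v| + 1))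
    (v : ℝ) (hv : v > 0) : 0 < ρ v := by
  rw [hρ v hv]
  positivity

lemma Phi_of_one_le (hα : 0 < α) (hρ : ∀ v > 0, ρ v = α * v * (|Real.log v| + 1))
    {v : ℝ} (hv : 1 ≤ v) : Phi ρ v = α⁻¹ * Real.log (1 + Real.log v) := by
  have hderiv : ∀ x ∈ uIcc 1 v,
      HasDerivAt (fun x => α⁻¹ * Real.log (1 + Real.log x)) (1 / ρ x) x := by
    intro x hx
    have hx1 : 1 ≤ x := by rw [uIcc_of_le hv] at hx; exact hx.1
    have hx0 : 0 < x := one_pos.trans_le hx1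
    have hlog : 0 ≤ Real.log x := Real.log_nonneg hx1
    have h := (((Real.hasDerivAt_log hx0.ne').const_add 1).log (by linarith)).const_mul α⁻¹
    refine h.congr_deriv ?_
    rw [hρ x hx0, abs_of_nonneg hlog]
    field_simp
    ring
  rw [Phi, intervalIntegral.integral_eq_sub_of_hasDerivAt hderiv
    (intervalIntegrable_one_div_of_pos (continuousOn_rho hρ)
      (rho_pos hα hρ) one_pos (one_pos.trans_le hv))]
  simp

lemma Phi_of_le_one (hα : 0 < α) (hρ : ∀ v > 0, ρ v = α * v * (|Real.log v| + 1))
    {v : ℝ} (hv0 : 0 < v) (hv : v ≤ 1) : Phi ρ v = -(α⁻¹ * Real.log (1 - Real.log v)) := by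
  have hderiv : ∀ x ∈ uIcc 1 v,
      HasDerivAt (fun x => -(α⁻¹ * Real.log (1 - Real.log x))) (1 / ρ x) x := by
    intro x hx
    rw [uIcc_of_ge hv] at hx
    have hx0 : 0 < x := hv0.trans_le hx.1
    have hlog : Real.log x ≤ 0 := Real.log_nonpos hx0.le hx.2
    have h := ((((Real.hasDerivAt_log hx0.ne').const_sub 1).log (by linarith)).const_mul α⁻¹).neg
    refine h.congr_deriv ?_
    rw [hρ x hx0, abs_of_nonpos hlog]
    field_simp
    ring
  rw [Phi, intervalIntegral.integral_eq_sub_of_hasDerivAt hderiv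
    (intervalIntegrable_one_div_of_pos (continuousOn_rho hρ)
      (rho_pos hα hρ) one_pos hv0)]
  simp

lemma exp_mul_Phi_of_one_le (hα : 0 < α) (hρ : ∀ v > 0, ρ v = α * v * (|Real.log v| + 1))
    {v : ℝ} (hv : 1 ≤ v) : Real.exp (α * Phi ρ v) = 1 + Real.log v := by
  rw [Phi_of_one_le hα hρ hv, mul_inv_cancel_left₀ hα.ne',
    Real.exp_log (by linarith [Real.log_nonneg hv])]

lemma exp_mul_Phi_of_le_one (hα : 0 < α) (hρ : ∀ v > 0, ρ v = α * v * (|Real.log v| + 1))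
    {v : ℝ} (hv0 : 0 < v) (hv : v ≤ 1) : Real.exp (α * Phi ρ v) = (1 - Real.log v)⁻¹ := by
  rw [Phi_of_le_one hα hρ hv0 hv, mul_neg, mul_inv_cancel_left₀ hα.ne', Real.exp_neg,
    Real.exp_log (by linarith [Real.log_nonpos hv0.le hv])]

lemma exp_mul_Phi_add_of_le_one (hα : 0 < α)
    (hρ : ∀ v > 0, ρ v = α * v * (|Real.log v| + 1)) {v : ℝ} (hv0 : 0 < v) (hv : v ≤ 1)
    (w : ℝ) : Real.exp (α * (Phi ρ v + w)) = Real.exp (α * w) / (1 - Real.log v) := by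
  rw [mul_add, Real.exp_add, exp_mul_Phi_of_le_one hα hρ hv0 hv, inv_mul_eq_div]

lemma Phi_exp_exp_sub_one (hα : 0 < α) (hρ : ∀ v > 0, ρ v = α * v * (|Real.log v| + 1))
    {y : ℝ} (hy : 0 ≤ y) : Phi ρ (Real.exp (Real.exp (α * y) - 1)) = y := by
  have hexp : 1 ≤ Real.exp (α * y) := Real.one_le_exp_iff.mpr (by positivity)
  rw [Phi_of_one_le hα hρ (Real.one_le_exp_iff.mpr (by linarith)), Real.log_exp,
    add_sub_cancel, Real.log_exp, inv_mul_cancel_left₀ hα.ne']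

lemma Phi_exp_one_sub_exp (hα : 0 < α) (hρ : ∀ v > 0, ρ v = α * v * (|Real.log v| + 1))
    {y : ℝ} (hy : y ≤ 0) : Phi ρ (Real.exp (1 - Real.exp (-(α * y)))) = y := by
  have hexp : 1 ≤ Real.exp (-(α * y)) :=
    Real.one_le_exp_iff.mpr (neg_nonneg.mpr (mul_nonpos_of_nonneg_of_nonpos hα.le hy))
  rw [Phi_of_le_one hα hρ (Real.exp_pos _) (Real.exp_le_one_iff.mpr (by linarith)),
    Real.log_exp, sub_sub_cancel, Real.log_exp, mul_neg, inv_mul_cancel_left₀ hα.ne', neg_neg]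

lemma image_Phi_Ioi (hα : 0 < α) (hρ : ∀ v > 0, ρ v = α * v * (|Real.log v| + 1)) :
    Phi ρ '' Ioi 0 = univ := by
  refine eq_univ_of_forall fun y => ?_
  rcases le_total 0 y with hy | hy
  · exact ⟨_, Real.exp_pos _, Phi_exp_exp_sub_one hα hρ hy⟩
  · exact ⟨_, Real.exp_pos _, Phi_exp_one_sub_exp hα hρ hy⟩

lemma Psi_of_nonneg (hα : 0 < α) (hρ : ∀ v > 0, ρ v = α * v * (|Real.log v| + 1))
    {v w : ℝ} (hv : 0 < v) (h : 0 ≤ Phi ρ v + w) :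
    Psi ρ v w = Real.exp (Real.exp (α * (Phi ρ v + w)) - 1) :=
  Psi_eq_of_Phi_eq (Phi_strictMonoOn (continuousOn_rho hρ) (rho_pos hα hρ)) hv (Real.exp_pos _)
    (Phi_exp_exp_sub_one hα hρ h)

lemma Psi_of_nonpos (hα : 0 < α) (hρ : ∀ v > 0, ρ v = α * v * (|Real.log v| + 1))
    {v w : ℝ} (hv : 0 < v) (h : Phi ρ v + w ≤ 0) :
    Psi ρ v w = Real.exp (1 - Real.exp (-(α * (Phi ρ v + w)))) :=
  Psi_eq_of_Phi_eq (Phi_strictMonoOn (continuousOn_rho hρ) (rho_pos hα hρ)) hv (Real.exp_pos _)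
    (Phi_exp_one_sub_exp hα hρ h)

lemma Psi_of_one_le (hα : 0 < α) (hρ : ∀ v > 0, ρ v = α * v * (|Real.log v| + 1))
    {v w : ℝ} (hv : 1 ≤ v) (hw : 0 ≤ w) :
    Psi ρ v w = Real.exp ((1 + Real.log v) * Real.exp (α * w) - 1) := by
  have hPhi : 0 ≤ Phi ρ v := by
    rw [Phi_of_one_le hα hρ hv]
    exact mul_nonneg (inv_nonneg.mpr hα.le) (Real.log_nonneg (by linarith [Real.log_nonneg hv]))
  rw [Psi_of_nonneg hα hρ (one_pos.trans_le hv) (by linarith), mul_add, Real.exp_add,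
    exp_mul_Phi_of_one_le hα hρ hv]

lemma Psi_of_exp_le_of_lt_one (hα : 0 < α) (hρ : ∀ v > 0, ρ v = α * v * (|Real.log v| + 1))
    {v w : ℝ} (hv : Real.exp (1 - Real.exp (α * w)) ≤ v) (hv1 : v < 1) :
    Psi ρ v w = Real.exp (Real.exp (α * w) / (1 - Real.log v) - 1) := by
  have hv0 : 0 < v := (Real.exp_pos _).trans_le hv
  have hlog : 1 - Real.exp (α * w) ≤ Real.log v := (Real.le_log_iff_exp_le hv0).mpr hv
  have hden : 0 < 1 - Real.log v := by linarith [Real.log_neg hv0 hv1]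
  have hexp := exp_mul_Phi_add_of_le_one hα hρ hv0 hv1.le w
  have hnonneg : 0 ≤ Phi ρ v + w := by
    rw [← mul_nonneg_iff_of_pos_left hα, ← Real.one_le_exp_iff, hexp, one_le_div hden]
    linarith
  rw [Psi_of_nonneg hα hρ hv0 hnonneg, hexp]

lemma Psi_of_lt_exp (hα : 0 < α) (hρ : ∀ v > 0, ρ v = α * v * (|Real.log v| + 1))
    {v w : ℝ} (hv0 : 0 < v) (hw : 0 ≤ w) (hv : v < Real.exp (1 - Real.exp (α * w))) :
    Psi ρ v w = Real.exp (1 - (1 - Real.log v) * Real.exp (-(α * w))) := by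
  have hlog : Real.log v < 1 - Real.exp (α * w) := (Real.log_lt_iff_lt_exp hv0).mpr hv
  have hE : 1 ≤ Real.exp (α * w) := Real.one_le_exp_iff.mpr (by positivity)
  have hv1 : v ≤ 1 := hv.le.trans (Real.exp_le_one_iff.mpr (by linarith))
  have hden : 0 < 1 - Real.log v := by linarith
  have hexp := exp_mul_Phi_add_of_le_one hα hρ hv0 hv1 w
  have hnonpos : Phi ρ v + w ≤ 0 := by
    refine nonpos_of_mul_nonpos_right ?_ hα
    rw [← Real.exp_le_one_iff, hexp, div_le_one hden]
    linarith
  rw [Psi_of_nonpos hα hρ hv0 hnonpos, Real.exp_neg, hexp, inv_div, div_eq_mul_inv,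
    ← Real.exp_neg]

end LogLinearRate

theorem stmt_3_general (αhat : ℝ) (hαhat : αhat ∈ Set.Ioc (0:ℝ) 1) (ρ : ℝ → ℝ)
    (hρ : ∀ v > (0:ℝ), ρ v = αhat * v * (|Real.log v| + 1)) :
    Phi0 ρ = ⊥ ∧ PhiInfty ρ = ⊤ ∧
    Drho ρ = Set.Ici (0:ℝ) ×ˢ Set.Ici (0:ℝ) ∧
    ∀ v > (0:ℝ), ∀ w ≥ (0:ℝ),
      (1 ≤ v → Psi ρ v w = Real.exp ((1 + Real.log v) * Real.exp (αhat * w) - 1)) ∧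
      (Real.exp (1 - Real.exp (αhat * w)) ≤ v → v < 1 →
        Psi ρ v w = Real.exp (Real.exp (αhat * w) / (1 - Real.log v) - 1)) ∧
      (v < Real.exp (1 - Real.exp (αhat * w)) →
        Psi ρ v w = Real.exp (1 - (1 - Real.log v) * Real.exp (-(αhat * w)))) := by
  obtain ⟨hα, -⟩ := hαhat
  have hsurj := LogLinearRate.image_Phi_Ioi hα hρ
  have htop := PhiInfty_eq_top_of_image_eq_univ hsurj
  refine ⟨Phi0_eq_bot_of_image_eq_univ hsurj, htop, Drho_eq_of_PhiInfty_eq_top htop,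
    fun v hv w hw => ⟨fun hv1 => ?_, fun hvl hvu => ?_, fun hvu => ?_⟩⟩
  · exact LogLinearRate.Psi_of_one_le hα hρ hv1 hw
  · exact LogLinearRate.Psi_of_exp_le_of_lt_one hα hρ hvl hvu
  · exact LogLinearRate.Psi_of_lt_exp hα hρ hv hw hvu

/-- Example 3.4 of the paper: for `ρ(v) = αhat v (|log v| + 1)` with `αhat ∈ (0,1]` one has
`Φ_ρ(0) = -∞`, `Φ_ρ(∞) = ∞` (hence `D_ρ = [0,∞)²`) and the displayed explicit formula
for `Ψ_ρ(v,w)`. -/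
theorem stmt_3 (αhat : ℝ) (hαhat : αhat ∈ Set.Ioc (0:ℝ) 1) (ρ : ℝ → ℝ)
    (hρ : ∀ v > (0:ℝ), ρ v = αhat * v * (|Real.log v| + 1)) (hρ0 : ρ 0 = 0) :
    Phi0 ρ = ⊥ ∧ PhiInfty ρ = ⊤ ∧
    Drho ρ = Set.Ici (0:ℝ) ×ˢ Set.Ici (0:ℝ) ∧
    ∀ v > (0:ℝ), ∀ w ≥ (0:ℝ),
      (1 ≤ v → Psi ρ v w = Real.exp ((1 + Real.log v) * Real.exp (αhat * w) - 1)) ∧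
      (Real.exp (1 - Real.exp (αhat * w)) ≤ v → v < 1 →
        Psi ρ v w = Real.exp (Real.exp (αhat * w) / (1 - Real.log v) - 1)) ∧
      (v < Real.exp (1 - Real.exp (αhat * w)) →
        Psi ρ v w = Real.exp (1 - (1 - Real.log v) * Real.exp (-(αhat * w)))) :=
  stmt_3_general αhat hαhat ρ hρ
end

section
/- Let (Ω, ℱ, P) be a probability space, α ∈ (0, 1), and ρ : [0, ∞) → [0, ∞) be continuous with ρ(0) = 0 such that ρ^{1/α} is concave. Let η, Z : Ω → [0, ∞) be measurable with E[η^{1/(1−α)}] < ∞ and E[Z] < ∞, and let A ∈ ℱ. Then E[η · ρ(Z) · 1_A] ≤ E[η^{1/(1−α)}]^{1−α} · ( 1 − α + α · ρ(E[Z · 1_A])^{1/α} ). -/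
/-!
Apply Hölder's inequality on `A` with the conjugate exponents `1/(1-α)` and `1/α`. The first
factor is at most `E[η^{1/(1-α)}]^{1-α}`. Writing `φ = ρ^{1/α}`, the second factor is
`(∫_A φ(Z))^α`; since `φ(0) = 0`, `∫_A φ(Z) = E[φ(Z 1_A)]`, so Jensen's inequality for the concave
`φ` bounds it by `φ(E[Z 1_A])^α`, and Young's inequality `x^α ≤ 1 - α + α x` finishes.
Integrability of `φ ∘ Z` comes from `Z ∈ L¹`, as a nonnegative concave `φ` grows at most linearly.
-/

open MeasureTheory Set

lemma Real.rpow_le_one_sub_add_mul {x α : ℝ} (hx : 0 ≤ x) (hα0 : 0 ≤ α) (hα1 : α ≤ 1) :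
    x ^ α ≤ 1 - α + α * x := by
  have bernoulli := rpow_one_add_le_one_add_mul_self (s := x - 1) (by linarith) hα0 hα1
  rw [add_sub_cancel] at bernoulli
  linarith

lemma ConcaveOn.le_two_add_mul_apply_one {φ : ℝ → ℝ} (hφ : ConcaveOn ℝ (Ici 0) φ)
    (hφ_nonneg : ∀ v, 0 ≤ v → 0 ≤ φ v) {z : ℝ} (hz : 0 ≤ z) :
    φ z ≤ (2 + z) * φ 1 := by
  have h1 := hφ_nonneg 1 zero_le_one
  rcases lt_trichotomy z 1 with hz1 | rfl | hz1
  · have slope := hφ.slope_anti_adjacent (mem_Ici.2 hz) (mem_Ici.2 zero_le_two) hz1 one_lt_two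
    rw [div_le_div_iff₀ (by norm_num) (by linarith)] at slope
    nlinarith [hφ_nonneg 2 zero_le_two]
  · nlinarith
  · have slope := hφ.slope_anti_adjacent (mem_Ici.2 le_rfl) (mem_Ici.2 hz) zero_lt_one hz1
    rw [div_le_div_iff₀ (by linarith) (by norm_num)] at slope
    nlinarith [hφ_nonneg 0 le_rfl]

section

variable {Ω : Type*} [MeasurableSpace Ω] {μ : Measure Ω}

lemma ContinuousOn.measurable_comp_of_nonneg {f : ℝ → ℝ}
    (hf : ContinuousOn f (Ici 0)) {Z : Ω → ℝ} (hZ : Measurable Z) (hZ0 : ∀ ω, 0 ≤ Z ω) :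
    Measurable fun ω => f (Z ω) := by
  have hcont : Continuous fun x => f (max x 0) :=
    hf.comp_continuous (continuous_id.max continuous_const) fun x => le_max_right x 0
  simpa [Function.comp_def, hZ0] using hcont.measurable.comp hZ

lemma ConcaveOn.integrable_comp_of_nonneg [IsFiniteMeasure μ] {φ : ℝ → ℝ}
    (hφ : ConcaveOn ℝ (Ici 0) φ) (hφ_nonneg : ∀ v, 0 ≤ v → 0 ≤ φ v) {Z : Ω → ℝ}
    (hZ0 : ∀ ω, 0 ≤ Z ω) (hZ : Integrable Z μ)
    (hφZ : AEStronglyMeasurable (fun ω => φ (Z ω)) μ) :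
    Integrable (fun ω => φ (Z ω)) μ := by
  refine Integrable.mono' (((integrable_const 2).add hZ).mul_const (φ 1)) hφZ
    (Filter.Eventually.of_forall fun ω => ?_)
  rw [Real.norm_of_nonneg (hφ_nonneg _ (hZ0 ω))]
  exact hφ.le_two_add_mul_apply_one hφ_nonneg (hZ0 ω)

lemma ConcaveOn.setIntegral_comp_le [IsProbabilityMeasure μ] {φ : ℝ → ℝ}
    (hφ : ConcaveOn ℝ (Ici 0) φ) (hφc : ContinuousOn φ (Ici 0)) (hφ0 : φ 0 = 0)
    {Z : Ω → ℝ} (hZ0 : ∀ ω, 0 ≤ Z ω) (hZ : Integrable Z μ)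
    (hφZ : Integrable (fun ω => φ (Z ω)) μ) {A : Set Ω} (hA : MeasurableSet A) :
    ∫ ω in A, φ (Z ω) ∂μ ≤ φ (∫ ω in A, Z ω ∂μ) := by
  have hcomp : φ ∘ A.indicator Z = A.indicator fun ω => φ (Z ω) :=
    (indicator_comp_of_zero hφ0).symm
  have jensen := hφ.le_map_integral hφc isClosed_Ici
    (Filter.Eventually.of_forall fun ω => indicator_nonneg (fun ω _ => hZ0 ω) ω)
    (hZ.indicator hA) (hcomp ▸ hφZ.indicator hA)
  rwa [← Function.comp_def φ, hcomp, integral_indicator hA, integral_indicator hA] at jensen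

lemma memLp_ofReal_of_integrable_rpow {p : ℝ} (hp : 0 < p) {f : Ω → ℝ}
    (hf0 : ∀ ω, 0 ≤ f ω) (hfm : AEStronglyMeasurable f μ)
    (hf : Integrable (fun ω => f ω ^ p) μ) : MemLp f (ENNReal.ofReal p) μ := by
  refine (integrable_norm_rpow_iff hfm (by simpa using hp) ENNReal.ofReal_ne_top).1 ?_
  simpa only [Real.norm_of_nonneg (hf0 _), ENNReal.toReal_ofReal hp.le] using hf

lemma integral_mul_le_integral_rpow_mul_integral_rpow {α : ℝ} (hα : α ∈ Ioo 0 1)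
    {f g : Ω → ℝ} (hf0 : ∀ ω, 0 ≤ f ω) (hg0 : ∀ ω, 0 ≤ g ω)
    (hfm : AEStronglyMeasurable f μ) (hgm : AEStronglyMeasurable g μ)
    (hf : Integrable (fun ω => f ω ^ (1 / (1 - α))) μ)
    (hg : Integrable (fun ω => g ω ^ (1 / α)) μ) :
    ∫ ω, f ω * g ω ∂μ ≤
      (∫ ω, f ω ^ (1 / (1 - α)) ∂μ) ^ (1 - α) * (∫ ω, g ω ^ (1 / α) ∂μ) ^ α := by
  obtain ⟨hα0, hα1⟩ := hα
  have hpq : (1 / (1 - α)).HolderConjugate (1 / α) :=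
    ⟨by simp only [one_div, inv_inv]; ring, by simp [hα1], by simp [hα0]⟩
  simpa only [one_div_one_div] using integral_mul_le_Lp_mul_Lq_of_nonneg hpq
    (Filter.Eventually.of_forall hf0) (Filter.Eventually.of_forall hg0)
    (memLp_ofReal_of_integrable_rpow hpq.pos hf0 hfm hf)
    (memLp_ofReal_of_integrable_rpow hpq.symm.pos hg0 hgm hg)

end

/-- The Hölder–Jensen–Young estimate used in the proof of the paper's second moment
estimate (Proposition 4.3): for `α ∈ (0,1)`, `ρ : [0,∞) → [0,∞)` continuous with
`ρ(0) = 0` and `ρ^{1/α}` concave, nonnegative `η, Z` with `E[η^{1/(1-α)}] < ∞` and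
`E[Z] < ∞`, and an event `A`,
`E[η ρ(Z) 1_A] ≤ E[η^{1/(1-α)}]^{1-α} (1 - α + α ρ(E[Z 1_A])^{1/α})`. -/
theorem stmt_8 {Ω : Type*} [MeasurableSpace Ω] (P : Measure Ω) [IsProbabilityMeasure P]
    (α : ℝ) (hα : α ∈ Set.Ioo (0:ℝ) 1)
    (ρ : ℝ → ℝ) (hρc : ContinuousOn ρ (Set.Ici 0)) (hρ0 : ρ 0 = 0)
    (hρnn : ∀ v, 0 ≤ v → 0 ≤ ρ v)
    (hconc : ConcaveOn ℝ (Set.Ici 0) (fun v => ρ v ^ (1 / α)))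
    (η Z : Ω → ℝ) (hηm : Measurable η) (hZm : Measurable Z)
    (hη0 : ∀ ω, 0 ≤ η ω) (hZ0 : ∀ ω, 0 ≤ Z ω)
    (hηint : Integrable (fun ω => η ω ^ (1 / (1 - α))) P)
    (hZint : Integrable Z P)
    (A : Set Ω) (hA : MeasurableSet A) :
    ∫ ω in A, η ω * ρ (Z ω) ∂P ≤
      (∫ ω, η ω ^ (1 / (1 - α)) ∂P) ^ (1 - α) *
        (1 - α + α * ρ (∫ ω in A, Z ω ∂P) ^ (1 / α)) := by
  set φ : ℝ → ℝ := fun v => ρ v ^ (1 / α)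
  have hφ_nonneg : ∀ v, 0 ≤ v → 0 ≤ φ v := fun v hv => Real.rpow_nonneg (hρnn v hv) _
  have hφ0 : φ 0 = 0 := by simp [φ, hρ0, hα.1.ne']
  have hφc : ContinuousOn φ (Ici 0) := hρc.rpow_const fun _ _ => Or.inr (by simp [hα.1.le])
  have hρZm := hρc.measurable_comp_of_nonneg hZm hZ0
  have hφZ : Integrable (fun ω => φ (Z ω)) P :=
    hconc.integrable_comp_of_nonneg hφ_nonneg hZ0 hZint (hρZm.pow_const _).aestronglyMeasurable
  have hηp_nonneg : ∀ ω, 0 ≤ η ω ^ (1 / (1 - α)) := fun ω => Real.rpow_nonneg (hη0 ω) _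
  have hφZA_nonneg : 0 ≤ ∫ ω in A, φ (Z ω) ∂P :=
    setIntegral_nonneg hA fun ω _ => hφ_nonneg _ (hZ0 ω)
  have hE_nonneg : 0 ≤ (∫ ω, η ω ^ (1 / (1 - α)) ∂P) ^ (1 - α) :=
    Real.rpow_nonneg (integral_nonneg hηp_nonneg) _
  calc ∫ ω in A, η ω * ρ (Z ω) ∂P
      ≤ (∫ ω in A, η ω ^ (1 / (1 - α)) ∂P) ^ (1 - α) * (∫ ω in A, φ (Z ω) ∂P) ^ α :=
        integral_mul_le_integral_rpow_mul_integral_rpow hα hη0 (fun ω => hρnn _ (hZ0 ω))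
          hηm.aestronglyMeasurable hρZm.aestronglyMeasurable hηint.restrict hφZ.restrict
    _ ≤ (∫ ω, η ω ^ (1 / (1 - α)) ∂P) ^ (1 - α) * φ (∫ ω in A, Z ω ∂P) ^ α :=
        mul_le_mul
          (Real.rpow_le_rpow (setIntegral_nonneg hA fun ω _ => hηp_nonneg ω)
            (setIntegral_le_integral hηint (.of_forall hηp_nonneg)) (sub_nonneg.2 hα.2.le))
          (Real.rpow_le_rpow hφZA_nonneg (hconc.setIntegral_comp_le hφc hφ0 hZ0 hZint hφZ hA)
            hα.1.le)
          (Real.rpow_nonneg hφZA_nonneg _) hE_nonneg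
    _ ≤ _ :=
        mul_le_mul_of_nonneg_left (Real.rpow_le_one_sub_add_mul
          (hφ_nonneg _ (setIntegral_nonneg hA fun ω _ => hZ0 ω)) hα.1.le hα.2.le) hE_nonneg
end
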